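/- arXiv:2112.07234 — 2 statements merged into one kernel-verified Lean document; each statement's English description precedes it below -/
import Mathlib

section
/- Assume s γ₃ γ₄ > γ₂, s < γ₃, and β < 1. Then the phase line of the deterministic model has the bistable sign pattern: F(x) < 0 for all x in the open interval (0, X₂), F(x) > 0 for all x in (X₂, X₃), and F(x) < 0 for all x > X₃. -/
/-!
Clearing the positive denominator `γ₃ γ₄ x + 1`, the per-capita growth rate
`s - γ₂ x - γ₃ / (γ₃ γ₄ x + 1)` has the sign of `-(a x² - b x + c)` with `a = γ₂ γ₃ γ₄`,
`b = s γ₃ γ₄ - γ₂`, `c = γ₃ - s`, and `β = 4ac / b²`, so `X₂ < X₃` are the two roots given by the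
quadratic formula. Both are positive because `b > 0` and `0 < β < 1`, so on `x > 0` the sign of
`F` is that of `-(x - X₂)(x - X₃)`.
-/

theorem quadratic_eq_mul_sub_root_mul_sub_root {a b c r : ℝ} (ha : a ≠ 0) (hb : b ≠ 0)
    (hr : r ^ 2 = 1 - 4 * a * c / b ^ 2) (x : ℝ) :
    a * x ^ 2 - b * x + c =
      a * (x - b * (1 - r) / (2 * a)) * (x - b * (1 + r) / (2 * a)) := by
  have hr' : r ^ 2 * b ^ 2 = b ^ 2 - 4 * a * c := by
    rw [hr]; field_simp
  field_simp
  linear_combination hr'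

theorem quadratic_roots_pos_lt {a b r : ℝ} (ha : 0 < a) (hb : 0 < b) (hr₀ : 0 < r)
    (hr₁ : r < 1) :
    0 < b * (1 - r) / (2 * a) ∧ b * (1 - r) / (2 * a) < b * (1 + r) / (2 * a) := by
  have : 0 < 1 - r := by linarith
  exact ⟨by positivity, by gcongr; linarith⟩

theorem allee_rate_eq {s γ₂ γ₃ γ₄ x : ℝ} (hD : γ₃ * γ₄ * x + 1 ≠ 0) :
    s - γ₂ * x - γ₃ / (γ₃ * γ₄ * x + 1) =
      -(γ₂ * γ₃ * γ₄ * x ^ 2 - (s * γ₃ * γ₄ - γ₂) * x + (γ₃ - s)) / (γ₃ * γ₄ * x + 1) := by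
  rw [eq_div_iff hD, sub_mul, div_mul_cancel₀ _ hD]
  ring

theorem sign_pattern_of_eq_mul_neg_quadratic {F D : ℝ → ℝ} {a p q : ℝ} (ha : 0 < a)
    (hp : 0 < p) (hpq : p < q) (hD : ∀ x, 0 < x → 0 < D x)
    (hF : ∀ x, 0 < x → F x = x * (-(a * (x - p) * (x - q)) / D x)) :
    (∀ x ∈ Set.Ioo 0 p, F x < 0) ∧ (∀ x ∈ Set.Ioo p q, F x > 0) ∧ (∀ x, q < x → F x < 0) := by
  refine ⟨fun x ⟨hx0, hxp⟩ => ?_, fun x ⟨hpx, hxq⟩ => ?_, fun x hqx => ?_⟩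
  · have : 0 < a * (x - p) * (x - q) :=
      mul_pos_of_neg_of_neg (mul_neg_of_pos_of_neg ha (sub_neg.2 hxp))
        (sub_neg.2 (hxp.trans hpq))
    rw [hF x hx0]
    exact mul_neg_of_pos_of_neg hx0 (div_neg_of_neg_of_pos (by linarith) (hD x hx0))
  · have hx0 : 0 < x := hp.trans hpx
    have : a * (x - p) * (x - q) < 0 :=
      mul_neg_of_pos_of_neg (mul_pos ha (sub_pos.2 hpx)) (sub_neg.2 hxq)
    rw [hF x hx0]
    exact mul_pos hx0 (div_pos (by linarith) (hD x hx0))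
  · have hx0 : 0 < x := (hp.trans hpq).trans hqx
    have : 0 < a * (x - p) * (x - q) :=
      mul_pos (mul_pos ha (sub_pos.2 (hpq.trans hqx))) (sub_pos.2 hqx)
    rw [hF x hx0]
    exact mul_neg_of_pos_of_neg hx0 (div_neg_of_neg_of_pos (by linarith) (hD x hx0))

theorem bistable_sign_pattern_general
    (s γ₂ γ₃ γ₄ : ℝ) (h2 : 0 < γ₂) (h3 : 0 < γ₃) (h4 : 0 < γ₄)
    (F : ℝ → ℝ)
    (hF : ∀ x, F x = x * (s - γ₂ * x - γ₃ / (γ₃ * γ₄ * x + 1)))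
    (β X₂ X₃ : ℝ)
    (hβ : β = 4 * γ₂ * γ₃ * γ₄ * (γ₃ - s) / (s * γ₃ * γ₄ - γ₂) ^ 2)
    (hX₂ : X₂ = (s * γ₃ * γ₄ - γ₂) * (1 - Real.sqrt (1 - β)) / (2 * γ₂ * γ₃ * γ₄))
    (hX₃ : X₃ = (s * γ₃ * γ₄ - γ₂) * (1 + Real.sqrt (1 - β)) / (2 * γ₂ * γ₃ * γ₄))
    (hgt : s * γ₃ * γ₄ > γ₂) (hsγ₃ : s < γ₃) (hβ1 : β < 1) :
    (∀ x ∈ Set.Ioo (0 : ℝ) X₂, F x < 0) ∧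
    (∀ x ∈ Set.Ioo X₂ X₃, F x > 0) ∧
    (∀ x : ℝ, X₃ < x → F x < 0) := by
  set a := γ₂ * γ₃ * γ₄
  set b := s * γ₃ * γ₄ - γ₂
  set r := Real.sqrt (1 - β)
  have ha : 0 < a := by positivity
  have hb : 0 < b := sub_pos.2 hgt
  have hβ0 : 0 < β := by rw [hβ]; have := sub_pos.2 hsγ₃; positivity
  have hr : r ^ 2 = 1 - β := Real.sq_sqrt (by linarith)
  have hr₀ : 0 < r := Real.sqrt_pos.2 (by linarith)
  have hr₁ : r < 1 := by nlinarith
  replace hX₂ : X₂ = b * (1 - r) / (2 * a) := by rw [hX₂]; ring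
  replace hX₃ : X₃ = b * (1 + r) / (2 * a) := by rw [hX₃]; ring
  subst hX₂ hX₃
  obtain ⟨hX₂0, hX₂₃⟩ := quadratic_roots_pos_lt ha hb hr₀ hr₁
  refine sign_pattern_of_eq_mul_neg_quadratic ha hX₂0 hX₂₃
    (D := fun x => γ₃ * γ₄ * x + 1) (fun x hx => by positivity) fun x hx => ?_
  rw [hF, allee_rate_eq (by positivity),
    quadratic_eq_mul_sub_root_mul_sub_root ha.ne' hb.ne' (by rw [hr, hβ]; ring)]

/-- Assume `s γ₃ γ₄ > γ₂`, `s < γ₃` and `β < 1`. Then the phase line of the deterministic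
model has the bistable sign pattern: `F(x) < 0` on `(0, X₂)`, `F(x) > 0` on `(X₂, X₃)`,
and `F(x) < 0` for all `x > X₃`. -/
theorem bistable_sign_pattern
    (s γ₂ γ₃ γ₄ : ℝ) (hs : 0 < s) (h2 : 0 < γ₂) (h3 : 0 < γ₃) (h4 : 0 < γ₄)
    (F : ℝ → ℝ)
    (hF : ∀ x, F x = x * (s - γ₂ * x - γ₃ / (γ₃ * γ₄ * x + 1)))
    (β X₂ X₃ : ℝ)
    (hβ : β = 4 * γ₂ * γ₃ * γ₄ * (γ₃ - s) / (s * γ₃ * γ₄ - γ₂) ^ 2)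
    (hX₂ : X₂ = (s * γ₃ * γ₄ - γ₂) * (1 - Real.sqrt (1 - β)) / (2 * γ₂ * γ₃ * γ₄))
    (hX₃ : X₃ = (s * γ₃ * γ₄ - γ₂) * (1 + Real.sqrt (1 - β)) / (2 * γ₂ * γ₃ * γ₄))
    (hgt : s * γ₃ * γ₄ > γ₂) (hsγ₃ : s < γ₃) (hβ1 : β < 1) :
    (∀ x ∈ Set.Ioo (0 : ℝ) X₂, F x < 0) ∧
    (∀ x ∈ Set.Ioo X₂ X₃, F x > 0) ∧
    (∀ x : ℝ, X₃ < x → F x < 0) :=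
  bistable_sign_pattern_general s γ₂ γ₃ γ₄ h2 h3 h4 F hF β X₂ X₃ hβ hX₂ hX₃ hgt hsγ₃ hβ1
end

section
/- Assume s γ₃ γ₄ > γ₂, s < γ₃, and β < 1. Let X : ℝ → ℝ be differentiable with X'(t) = F(X(t)) for all t ≥ 0 and X(0) ∈ (0, X₂). Then X(t) ∈ (0, X₂) for all t ≥ 0, and X(t) → 0 as t → ∞; that is, populations starting below the Allee threshold X₂ go extinct. -/
open Filter Topology Set Real

/-!
For `x > 0` the per-capita rate `F x / x` has the sign of
`-(γ₂ γ₃ γ₄ x² - (s γ₃ γ₄ - γ₂) x + (γ₃ - s))`, and `X₂` is the smaller root of this quadratic,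
so `F < 0` on `(0, X₂)`; there `F x / x` is also bounded below by a constant `-K`. Hence, as long
as the solution stays in `(0, X₂)`, it decreases (so stays below `X₂`) while `X t * exp (K t)`
increases (so `X` stays positive), and a first-exit-time argument makes `(0, X₂)` invariant.
The decreasing, bounded solution converges to some `L`; by the mean value theorem `F L = 0`,
which forces `L = 0`.
-/

/-- No hypothesis on the discriminant is needed: when it is negative, `√` returns `0` and the
quadratic has no real root. -/
theorem quadratic_pos_of_lt_smaller_root {a b c x : ℝ} (ha : 0 < a)
    (hx : x < (b - √(b ^ 2 - 4 * a * c)) / (2 * a)) : 0 < a * x ^ 2 - b * x + c := by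
  set D := b ^ 2 - 4 * a * c
  have hu : 2 * a * x - b + √D < 0 := by
    rw [lt_div_iff₀ (by positivity)] at hx; linarith
  have hD : D ≤ √D ^ 2 := by
    rcases le_total 0 D with hD | hD
    · rw [sq_sqrt hD]
    · rw [sqrt_eq_zero'.2 hD]; simpa using hD
  have key : 4 * a * (a * x ^ 2 - b * x + c)
      = (2 * a * x - b + √D) ^ 2 - 2 * (2 * a * x - b + √D) * √D + (√D ^ 2 - D) := by
    ring
  have : 0 < 4 * a * (a * x ^ 2 - b * x + c) := by
    rw [key]; nlinarith [sqrt_nonneg D]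
  exact pos_of_mul_pos_right this (by positivity)

theorem mul_sqrt_one_sub_div_sq {b : ℝ} (hb : 0 < b) (d : ℝ) :
    b * √(1 - d / b ^ 2) = √(b ^ 2 - d) := by
  rw [← sqrt_sq hb.le, ← sqrt_mul (sq_nonneg b), sqrt_sq hb.le, mul_sub, mul_one,
    mul_div_cancel₀ _ (by positivity)]

theorem forall_ge_mem_of_forall_Ico_mem {α β : Type*} [ConditionallyCompleteLinearOrder α]
    [TopologicalSpace α] [OrderTopology α] [TopologicalSpace β] {X : α → β} {U : Set β} {a : α}
    (hX : Continuous X) (hU : IsOpen U) (h : ∀ T ≥ a, (∀ t ∈ Ico a T, X t ∈ U) → X T ∈ U) :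
    ∀ t ≥ a, X t ∈ U := by
  by_contra! hexit
  set S := {t | a ≤ t ∧ X t ∉ U}
  have hS : IsClosed S := isClosed_Ici.inter (hU.isClosed_compl.preimage hX)
  have hbdd : BddBelow S := ⟨a, fun t ht => ht.1⟩
  have hfirst : sInf S ∈ S := hS.csInf_mem hexit hbdd
  refine hfirst.2 (h _ hfirst.1 fun t ht => ?_)
  by_contra hXt
  exact (csInf_le hbdd ⟨ht.1, hXt⟩).not_gt ht.2

theorem AntitoneOn.exists_tendsto_atTop_of_bddBelow {ι α : Type*} [LinearOrder ι]
    [ConditionallyCompleteLinearOrder α] [TopologicalSpace α] [OrderTopology α] {f : ι → α}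
    {a : ι} (hf : AntitoneOn f (Ici a)) (hbdd : BddBelow (f '' Ici a)) :
    ∃ L, Tendsto f atTop (𝓝 L) := by
  set g := fun t => f (max t a)
  have hg : Antitone g := fun s t hst =>
    hf (le_max_right s a) (le_max_right t a) (max_le_max_right a hst)
  have hgbdd : BddBelow (range g) :=
    hbdd.mono (range_subset_iff.2 fun t => mem_image_of_mem f (le_max_right t a))
  refine ⟨_, (tendsto_atTop_ciInf hg hgbdd).congr' ?_⟩
  filter_upwards [eventually_ge_atTop a] with t ht
  simp only [g, max_eq_left ht]

theorem mul_exp_le_mul_exp_of_neg_mul_le_deriv {X : ℝ → ℝ} {K a b : ℝ}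
    (hX : Differentiable ℝ X) (hab : a ≤ b) (h : ∀ t ∈ Ioo a b, -(K * X t) ≤ deriv X t) :
    X a * exp (K * a) ≤ X b * exp (K * b) := by
  have hmono : MonotoneOn (fun t => X t * exp (K * t)) (Icc a b) := by
    have hd : Differentiable ℝ fun t => X t * exp (K * t) := by fun_prop
    refine monotoneOn_of_deriv_nonneg (convex_Icc a b) hd.continuous.continuousOn
      hd.differentiableOn fun t ht => ?_
    rw [interior_Icc] at ht
    have hderiv : deriv (fun t => X t * exp (K * t)) t
        = (deriv X t + K * X t) * exp (K * t) := by
      rw [((hX t).hasDerivAt.fun_mul ((hasDerivAt_id' t).const_mul K).exp).deriv]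
      ring
    rw [hderiv]
    exact mul_nonneg (by linarith [h t ht]) (exp_pos _).le
  exact hmono ⟨le_rfl, hab⟩ ⟨hab, le_rfl⟩ hab

theorem eq_zero_of_tendsto_of_deriv_eq {f X : ℝ → ℝ} {L : ℝ} (hX : Differentiable ℝ X)
    (hODE : ∀ t ≥ 0, deriv X t = f (X t)) (hf : ContinuousAt f L)
    (hlim : Tendsto X atTop (𝓝 L)) : f L = 0 := by
  have hmvt : ∀ t : ℝ, ∃ ξ ∈ Ioo t (t + 1), deriv X ξ = X (t + 1) - X t := fun t => by
    simpa using exists_deriv_eq_slope X (lt_add_one t) hX.continuous.continuousOn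
      hX.differentiableOn
  choose ξ hξ hderiv using hmvt
  have hξ_top : Tendsto ξ atTop atTop :=
    tendsto_atTop_mono (fun t => (hξ t).1.le) tendsto_id
  have h1 : Tendsto (fun t => deriv X (ξ t)) atTop (𝓝 (f L)) := by
    refine ((hf.tendsto.comp hlim).comp hξ_top).congr' ?_
    filter_upwards [hξ_top.eventually_ge_atTop 0] with t ht
    exact (hODE _ ht).symm
  have h2 : Tendsto (fun t => deriv X (ξ t)) atTop (𝓝 (L - L)) := by
    simp_rw [hderiv]
    exact (hlim.comp (tendsto_atTop_add_const_right _ 1 tendsto_id)).sub hlim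
  rw [sub_self] at h2
  exact tendsto_nhds_unique h1 h2

theorem forall_mem_Ioo_of_deriv_eq {f X : ℝ → ℝ} {a K : ℝ} (hX : Differentiable ℝ X)
    (hODE : ∀ t ≥ 0, deriv X t = f (X t)) (hnonpos : ∀ x ∈ Ioo 0 a, f x ≤ 0)
    (hlow : ∀ x ∈ Ioo 0 a, -(K * x) ≤ f x) (h0 : X 0 ∈ Ioo 0 a) :
    ∀ t ≥ 0, X t ∈ Ioo 0 a := by
  refine forall_ge_mem_of_forall_Ico_mem hX.continuous isOpen_Ioo fun T hT hbefore => ?_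
  have hderiv : ∀ t ∈ Ioo 0 T, deriv X t = f (X t) := fun t ht => hODE t ht.1.le
  have hdecr : X T ≤ X 0 := by
    refine antitoneOn_of_deriv_nonpos (convex_Icc 0 T) hX.continuous.continuousOn
      hX.differentiableOn (fun t ht => ?_) ⟨le_rfl, hT⟩ ⟨hT, le_rfl⟩ hT
    rw [interior_Icc] at ht
    exact hderiv t ht ▸ hnonpos _ (hbefore t (Ioo_subset_Ico_self ht))
  have hgrowth : X 0 * exp (K * 0) ≤ X T * exp (K * T) :=
    mul_exp_le_mul_exp_of_neg_mul_le_deriv hX hT fun t ht =>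
      hderiv t ht ▸ hlow _ (hbefore t (Ioo_subset_Ico_self ht))
  rw [mul_zero, exp_zero, mul_one] at hgrowth
  exact ⟨pos_of_mul_pos_left (h0.1.trans_le hgrowth) (exp_pos _).le, hdecr.trans_lt h0.2⟩

theorem tendsto_zero_of_deriv_eq {f X : ℝ → ℝ} {a : ℝ} (hX : Differentiable ℝ X)
    (hODE : ∀ t ≥ 0, deriv X t = f (X t)) (hneg : ∀ x ∈ Ioo 0 a, f x < 0)
    (hf : ∀ x ∈ Ico 0 a, ContinuousAt f x) (hinv : ∀ t ≥ 0, X t ∈ Ioo 0 a) :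
    Tendsto X atTop (𝓝 0) := by
  have hanti : AntitoneOn X (Ici 0) := by
    refine antitoneOn_of_deriv_nonpos (convex_Ici 0) hX.continuous.continuousOn
      hX.differentiableOn fun t ht => ?_
    rw [interior_Ici] at ht
    exact hODE t ht.le ▸ (hneg _ (hinv t ht.le)).le
  obtain ⟨L, hL⟩ := hanti.exists_tendsto_atTop_of_bddBelow
    ⟨0, forall_mem_image.2 fun t ht => (hinv t ht).1.le⟩
  have hL0 : 0 ≤ L := ge_of_tendsto hL <| eventually_atTop.2 ⟨0, fun t ht => (hinv t ht).1.le⟩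
  have hLa : L < a := (le_of_tendsto hL <| eventually_atTop.2
    ⟨0, fun t ht => hanti self_mem_Ici ht ht⟩).trans_lt (hinv 0 le_rfl).2
  have hfL : f L = 0 := eq_zero_of_tendsto_of_deriv_eq hX hODE (hf L ⟨hL0, hLa⟩) hL
  obtain rfl | hLpos := hL0.eq_or_lt
  · exact hL
  · exact absurd hfL (hneg L ⟨hLpos, hLa⟩).ne

noncomputable def alleeRate (s γ₂ γ₃ γ₄ x : ℝ) : ℝ := s - γ₂ * x - γ₃ / (γ₃ * γ₄ * x + 1)

theorem alleeRate_neg {s γ₂ γ₃ γ₄ x : ℝ} (hden : 0 < γ₃ * γ₄ * x + 1)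
    (hq : 0 < γ₂ * γ₃ * γ₄ * x ^ 2 - (s * γ₃ * γ₄ - γ₂) * x + (γ₃ - s)) :
    alleeRate s γ₂ γ₃ γ₄ x < 0 := by
  have hmul : alleeRate s γ₂ γ₃ γ₄ x * (γ₃ * γ₄ * x + 1)
      = -(γ₂ * γ₃ * γ₄ * x ^ 2 - (s * γ₃ * γ₄ - γ₂) * x + (γ₃ - s)) := by
    rw [alleeRate, sub_mul, div_mul_cancel₀ _ hden.ne']; ring
  exact neg_of_mul_neg_left (hmul ▸ neg_neg_of_pos hq) hden.le

theorem sub_sub_le_alleeRate {s γ₂ γ₃ γ₄ x M : ℝ} (h2 : 0 ≤ γ₂) (h3 : 0 ≤ γ₃)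
    (hγx : 0 ≤ γ₃ * γ₄ * x) (hxM : x ≤ M) : s - γ₂ * M - γ₃ ≤ alleeRate s γ₂ γ₃ γ₄ x := by
  have : γ₃ / (γ₃ * γ₄ * x + 1) ≤ γ₃ := div_le_self h3 (by linarith)
  unfold alleeRate; nlinarith

theorem continuousAt_alleeRate {s γ₂ γ₃ γ₄ x : ℝ} (hden : γ₃ * γ₄ * x + 1 ≠ 0) :
    ContinuousAt (alleeRate s γ₂ γ₃ γ₄) x := by
  unfold alleeRate; fun_prop (disch := exact hden)

theorem extinction_below_threshold_general
    (s γ₂ γ₃ γ₄ : ℝ) (h2 : 0 < γ₂) (h3 : 0 < γ₃) (h4 : 0 < γ₄)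
    (F : ℝ → ℝ)
    (hF : ∀ x, F x = x * (s - γ₂ * x - γ₃ / (γ₃ * γ₄ * x + 1)))
    (β X₂ : ℝ)
    (hβ : β = 4 * γ₂ * γ₃ * γ₄ * (γ₃ - s) / (s * γ₃ * γ₄ - γ₂) ^ 2)
    (hX₂ : X₂ = (s * γ₃ * γ₄ - γ₂) * (1 - Real.sqrt (1 - β)) / (2 * γ₂ * γ₃ * γ₄))
    (hgt : s * γ₃ * γ₄ > γ₂)
    (X : ℝ → ℝ) (hXdiff : Differentiable ℝ X)
    (hODE : ∀ t : ℝ, 0 ≤ t → deriv X t = F (X t))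
    (hX0 : X 0 ∈ Set.Ioo 0 X₂) :
    (∀ t : ℝ, 0 ≤ t → X t ∈ Set.Ioo 0 X₂) ∧
    Tendsto X atTop (𝓝 0) := by
  have hX₂root : X₂ = ((s * γ₃ * γ₄ - γ₂)
      - √((s * γ₃ * γ₄ - γ₂) ^ 2 - 4 * (γ₂ * γ₃ * γ₄) * (γ₃ - s))) / (2 * (γ₂ * γ₃ * γ₄)) := by
    rw [hX₂, hβ, mul_sub, mul_one, mul_sqrt_one_sub_div_sq (sub_pos.2 hgt)]
    ring_nf
  have hFx : ∀ x, F x = x * alleeRate s γ₂ γ₃ γ₄ x := hF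
  have hneg : ∀ x ∈ Ioo 0 X₂, F x < 0 := by
    rintro x ⟨hx0, hxX₂⟩
    refine hFx x ▸ mul_neg_of_pos_of_neg hx0 (alleeRate_neg (by positivity) ?_)
    have := quadratic_pos_of_lt_smaller_root (by positivity) (hX₂root ▸ hxX₂)
    linarith
  have hlow : ∀ x ∈ Ioo 0 X₂, -((γ₂ * X₂ + γ₃ - s) * x) ≤ F x := by
    rintro x ⟨hx0, hxX₂⟩
    have := sub_sub_le_alleeRate (s := s) (γ₄ := γ₄) h2.le h3.le (by positivity) hxX₂.le
    rw [hFx]; nlinarith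
  have hinv := forall_mem_Ioo_of_deriv_eq hXdiff hODE (fun x hx => (hneg x hx).le) hlow hX0
  refine ⟨hinv, tendsto_zero_of_deriv_eq hXdiff hODE hneg (fun x ⟨hx0, _⟩ => ?_) hinv⟩
  rw [funext hFx]
  exact continuousAt_id.mul (continuousAt_alleeRate (by positivity))

/-- Assume `s γ₃ γ₄ > γ₂`, `s < γ₃` and `β < 1`. If `X` is a solution of the
deterministic model `X' = F(X)` for `t ≥ 0` with `X(0) ∈ (0, X₂)`, then
`X(t) ∈ (0, X₂)` for all `t ≥ 0` and `X(t) → 0` as `t → ∞`: populations starting below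
the Allee threshold `X₂` go extinct. -/
theorem extinction_below_threshold
    (s γ₂ γ₃ γ₄ : ℝ) (hs : 0 < s) (h2 : 0 < γ₂) (h3 : 0 < γ₃) (h4 : 0 < γ₄)
    (F : ℝ → ℝ)
    (hF : ∀ x, F x = x * (s - γ₂ * x - γ₃ / (γ₃ * γ₄ * x + 1)))
    (β X₂ : ℝ)
    (hβ : β = 4 * γ₂ * γ₃ * γ₄ * (γ₃ - s) / (s * γ₃ * γ₄ - γ₂) ^ 2)
    (hX₂ : X₂ = (s * γ₃ * γ₄ - γ₂) * (1 - Real.sqrt (1 - β)) / (2 * γ₂ * γ₃ * γ₄))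
    (hgt : s * γ₃ * γ₄ > γ₂) (hsγ₃ : s < γ₃) (hβ1 : β < 1)
    (X : ℝ → ℝ) (hXdiff : Differentiable ℝ X)
    (hODE : ∀ t : ℝ, 0 ≤ t → deriv X t = F (X t))
    (hX0 : X 0 ∈ Set.Ioo 0 X₂) :
    (∀ t : ℝ, 0 ≤ t → X t ∈ Set.Ioo 0 X₂) ∧
    Tendsto X atTop (𝓝 0) :=
  extinction_below_threshold_general s γ₂ γ₃ γ₄ h2 h3 h4 F hF β X₂ hβ hX₂ hgt X hXdiff hODE hX0
end
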